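/- Single-mode lower bound for the Gaussian-weighted least squares: for any p > 0, r ∈ ℂ, and real λ, θ, one has ∫ (1/(√(2π)T)) exp(-t²/(2T²)) |p e^{-iλt} - r e^{-iθt}|² dt = p² + |r|² - 2 p Re(r) exp(-T²(θ-λ)²/2) ≥ p²(1 - exp(-T²(θ-λ)²)). -/

import Mathlib

/-!
Since both phases have modulus one, the integrand is `p² + ‖r‖² - 2p Re(r e^{i(λ-θ)t})`, and the
weight is the density of the centred normal law of variance `T²`. Integrating therefore replaces
`e^{i(λ-θ)t}` by the characteristic function `e^{-T²(λ-θ)²/2}` of that law. The inequality is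
the quadratic bound in `r`: the difference of the two sides is `(Re r - p e^{-T²(θ-λ)²/2})² + (Im r)²`.
-/

open MeasureTheory Complex ProbabilityTheory

lemma norm_exp_ofReal_mul_ofReal_mul_I (s t : ℝ) : ‖exp ((s : ℂ) * t * I)‖ = 1 := by
  rw [← ofReal_mul]
  exact norm_exp_ofReal_mul_I _

lemma norm_ofReal_mul_exp_sub_mul_exp_sq (p : ℝ) (r : ℂ) (a b t : ℝ) :
    ‖(p : ℂ) * exp (-I * a * t) - r * exp (-I * b * t)‖ ^ 2
      = p ^ 2 + ‖r‖ ^ 2 - 2 * p * (r * exp (((a - b : ℝ) : ℂ) * t * I)).re := by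
  have hphase : exp (-I * a * t) * exp (((a - b : ℝ) : ℂ) * t * I) = exp (-I * b * t) := by
    rw [← exp_add]
    push_cast
    ring_nf
  have hfactor : (p : ℂ) * exp (-I * a * t) - r * exp (-I * b * t)
      = exp (-I * a * t) * (p - r * exp (((a - b : ℝ) : ℂ) * t * I)) := by
    linear_combination r * hphase
  have hunit : ‖exp (-I * a * t)‖ = 1 := by
    rw [show -I * a * t = ((-a : ℝ) : ℂ) * t * I by push_cast; ring]
    exact norm_exp_ofReal_mul_ofReal_mul_I _ _
  have hz : ‖r * exp (((a - b : ℝ) : ℂ) * t * I)‖ = ‖r‖ := by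
    rw [norm_mul, norm_exp_ofReal_mul_ofReal_mul_I, mul_one]
  rw [hfactor, norm_mul, hunit, one_mul, ← hz, Complex.sq_norm, Complex.sq_norm, normSq_sub,
    normSq_ofReal, re_ofReal_mul, conj_re]
  ring

lemma integral_norm_ofReal_mul_exp_sub_mul_exp_sq (μ : Measure ℝ) [IsProbabilityMeasure μ]
    (p : ℝ) (r : ℂ) (a b : ℝ) :
    ∫ t, ‖(p : ℂ) * exp (-I * a * t) - r * exp (-I * b * t)‖ ^ 2 ∂μ
      = p ^ 2 + ‖r‖ ^ 2 - 2 * p * (r * charFun μ (a - b)).re := by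
  have hint : Integrable (fun t : ℝ ↦ r * exp (((a - b : ℝ) : ℂ) * t * I)) μ :=
    Integrable.of_bound (by fun_prop) ‖r‖ (ae_of_all _ fun t ↦ by
      rw [norm_mul, norm_exp_ofReal_mul_ofReal_mul_I, mul_one])
  have hint_re : Integrable (fun t : ℝ ↦ (r * exp (((a - b : ℝ) : ℂ) * t * I)).re) μ := hint.re
  have hre : ∫ t, (r * exp (((a - b : ℝ) : ℂ) * t * I)).re ∂μ = (r * charFun μ (a - b)).re := by
    rw [charFun_apply_real, ← integral_const_mul]
    exact integral_re hint
  simp_rw [norm_ofReal_mul_exp_sub_mul_exp_sq]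
  rw [integral_sub (integrable_const _) (hint_re.const_mul _), integral_const, integral_const_mul,
    hre, probReal_univ, one_smul]

lemma integral_gaussian_weight_smul {E : Type*} [NormedAddCommGroup E] [NormedSpace ℝ E]
    {T : ℝ} (hT : 0 < T) (f : ℝ → E) :
    ∫ t, (1 / (Real.sqrt (2 * Real.pi) * T) * Real.exp (-t ^ 2 / (2 * T ^ 2))) • f t
      = ∫ t, f t ∂gaussianReal 0 (T ^ 2).toNNReal := by
  rw [integral_gaussianReal_eq_integral_smul (by simpa using hT.ne')]
  congr with t
  rw [gaussianPDFReal, Real.coe_toNNReal _ (sq_nonneg T), Real.sqrt_mul' _ (sq_nonneg T),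
    Real.sqrt_sq hT.le, sub_zero, one_div]

lemma re_mul_charFun_gaussianReal_zero (r : ℂ) (v : NNReal) (s : ℝ) :
    (r * charFun (gaussianReal 0 v) s).re = r.re * Real.exp (-v * s ^ 2 / 2) := by
  rw [charFun_gaussianReal,
    show (s : ℂ) * (0 : ℝ) * I - v * s ^ 2 / 2 = ((-v * s ^ 2 / 2 : ℝ) : ℂ) by push_cast; ring,
    ← ofReal_exp, re_mul_ofReal]

lemma sq_mul_one_sub_sq_le (p x : ℝ) (r : ℂ) :
    p ^ 2 * (1 - x ^ 2) ≤ p ^ 2 + ‖r‖ ^ 2 - 2 * p * r.re * x := by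
  rw [Complex.sq_norm, normSq_apply]
  nlinarith [sq_nonneg (r.re - p * x), sq_nonneg r.im]

theorem stmt_11_general (T p lam θ : ℝ) (hT : 0 < T) (r : ℂ) :
    (∫ t : ℝ, (1 / (Real.sqrt (2 * Real.pi) * T)) * Real.exp (-t ^ 2 / (2 * T ^ 2)) *
        ‖(p : ℂ) * Complex.exp (-Complex.I * lam * t)
          - r * Complex.exp (-Complex.I * θ * t)‖ ^ 2)
      = p ^ 2 + ‖r‖ ^ 2 - 2 * p * r.re * Real.exp (-T ^ 2 * (θ - lam) ^ 2 / 2) ∧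
    p ^ 2 * (1 - Real.exp (-T ^ 2 * (θ - lam) ^ 2)) ≤
      p ^ 2 + ‖r‖ ^ 2 - 2 * p * r.re * Real.exp (-T ^ 2 * (θ - lam) ^ 2 / 2) := by
  have hsq : Real.exp (-T ^ 2 * (θ - lam) ^ 2) = Real.exp (-T ^ 2 * (θ - lam) ^ 2 / 2) ^ 2 := by
    rw [← Real.exp_nat_mul]
    ring_nf
  refine ⟨?_, hsq ▸ sq_mul_one_sub_sq_le _ _ _⟩
  simp_rw [← smul_eq_mul (a := _ * Real.exp _)]
  rw [integral_gaussian_weight_smul hT, integral_norm_ofReal_mul_exp_sub_mul_exp_sq,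
    re_mul_charFun_gaussianReal_zero, Real.coe_toNNReal _ (sq_nonneg T)]
  ring_nf

theorem stmt_11 (T p lam θ : ℝ) (hT : 0 < T) (hp : 0 < p) (r : ℂ) :
    (∫ t : ℝ, (1 / (Real.sqrt (2 * Real.pi) * T)) * Real.exp (-t ^ 2 / (2 * T ^ 2)) *
        ‖(p : ℂ) * Complex.exp (-Complex.I * lam * t)
          - r * Complex.exp (-Complex.I * θ * t)‖ ^ 2)
      = p ^ 2 + ‖r‖ ^ 2 - 2 * p * r.re * Real.exp (-T ^ 2 * (θ - lam) ^ 2 / 2) ∧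
    p ^ 2 * (1 - Real.exp (-T ^ 2 * (θ - lam) ^ 2)) ≤
      p ^ 2 + ‖r‖ ^ 2 - 2 * p * r.re * Real.exp (-T ^ 2 * (θ - lam) ^ 2 / 2) :=
  stmt_11_general T p lam θ hT r
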